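/- arXiv:1301.6441 — 2 statements merged into one kernel-verified Lean document; each statement's English description precedes it below -/
import Mathlib

section
/- Let b be a prime and a ≥ 1 an integer. For every z ∈ [0,1), the series Σ_{k=1}^{∞} b^{-(2a+1)⌊log_b k⌋} wal_k(z) converges absolutely and equals (b - 1 - b^{2a⌊log_b z⌋}(b^{2a+1} - 1))/(1 - b^{-2a}), where for z = 0 the term b^{2a⌊log_b 0⌋} is interpreted as 0 (so the sum equals (b-1)/(1-b^{-2a}) at z = 0). -/
/-!
Group the terms into the blocks `b^μ ≤ k < b^(μ+1)`, on which the weight `b^(-(2a+1)μ)` is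
constant. The Walsh functions with `k < b^m` are the characters of `(ℤ/b)^m` evaluated at the
first `m` digits of `z`, so their sum is `b^m` if those digits vanish, i.e. if `z < b^(-m)`, and
`0` otherwise. Hence block `μ` contributes `(b-1) b^(-2aμ)` while `z < b^(-μ-1)`, the single term
`-b^(-2aμ)` at `μ = -⌊log_b z⌋ - 1`, and nothing afterwards: a finite geometric sum, or an
infinite one when `z = 0`. Absolute convergence follows from
`b^(-(2a+1)⌊log_b k⌋) ≤ b^(2a+1) (k+1)^(-(2a+1))`.
-/

open scoped Classical
open Polynomial

noncomputable section

namespace ISPLR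

/-- `digit b k i` is the `i`-th base-`b` digit of `k`. -/
def digit (b k i : ℕ) : ℕ := k / b ^ i % b

/-- `trunc b m k` is the truncated polynomial `tr_m(k) ∈ F_b[x]`. -/
def trunc (b m k : ℕ) : Polynomial (ZMod b) :=
  ∑ i ∈ Finset.range m, Polynomial.C ((digit b k i : ZMod b)) * Polynomial.X ^ i

/-- `mu b k = ⌊log_b k⌋` for `k ≥ 1`. -/
def mu (b k : ℕ) : ℕ := Nat.log b k

/-- `r_{α,d}(k)`. -/
def rfun (b α d k : ℕ) : ℝ :=
  if k = 0 then 1 else (b : ℝ) ^ (-(((2 * min α d + 1) * mu b k : ℕ) : ℤ))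

/-- `blk d u = v(u)`: the set of coordinates `i` whose block `{(i-1)d+1,...,id}` meets `u`. -/
def blk (d : ℕ) (u : Finset ℕ) : Finset ℕ := u.image fun j => (j - 1) / d + 1

/-- The quality criterion `B_{α,d,γ}((q_1,...,q_τ), p)`. -/
def Bcrit (b α d m : ℕ) (γ : Finset ℕ → ℝ) (p : Polynomial (ZMod b))
    (τ : ℕ) (q : ℕ → Polynomial (ZMod b)) : ℝ :=
  ∑ u ∈ (Finset.Icc 1 τ).powerset.filter fun u => u ≠ ∅,
    (4 : ℝ) ^ ((blk d u).card * (d - α)) * γ (blk d u) *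
      ∑' k : ↥u → ℕ,
        (if (∀ j, 1 ≤ k j) ∧ p ∣ ∑ j, trunc b m (k j) * q (j : ℕ)
         then ∏ j, rfun b α d (k j) else 0)

/-- Membership in `R_{b,m}`: nonzero polynomials of degree `< m`. -/
def Rbm (b m : ℕ) (q : Polynomial (ZMod b)) : Prop :=
  q ≠ 0 ∧ q.degree < (m : WithBot ℕ)

/-- `R_{b,m}` as a finset. -/
def Rfin (b m : ℕ) : Finset (Polynomial (ZMod b)) :=
  ((Finset.range (b ^ m)).filter fun n => n ≠ 0).image (trunc b m)

/-- The CBC construction: `q 1 = 1`, every component lies in `R_{b,m}`, and each `q τ`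
minimizes the quality criterion given the previous components. -/
def CBC (b α d m ds : ℕ) (γ : Finset ℕ → ℝ) (p : Polynomial (ZMod b))
    (q : ℕ → Polynomial (ZMod b)) : Prop :=
  q 1 = 1 ∧ (∀ τ, 1 ≤ τ → τ ≤ ds → Rbm b m (q τ)) ∧
    ∀ τ, 2 ≤ τ → τ ≤ ds → ∀ q' : Polynomial (ZMod b), Rbm b m q' →
      Bcrit b α d m γ p τ q ≤ Bcrit b α d m γ p τ (Function.update q τ q')

/-- `C̃_{α,d,λ}`. -/
def Ctilde (b α d : ℕ) (lam : ℝ) : ℝ :=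
  max ((((b : ℝ) - 1) / (1 - (b : ℝ) ^ (-(2 * ((min α d : ℕ) : ℤ))))) ^ lam)
      (((b : ℝ) - 1) / (1 - (b : ℝ) ^ ((1 : ℝ) - (2 * ((min α d : ℕ) : ℝ) + 1) * lam)))

/-- `C_{α,d,λ,a}`. -/
def Cconst (b α d : ℕ) (lam : ℝ) (a : ℕ) : ℝ :=
  (4 : ℝ) ^ (lam * ((d - α : ℕ) : ℝ)) * (-1 + (1 + Ctilde b α d lam) ^ a)

/-- `φ_{α,d}(z)`. -/
def phi (b α d : ℕ) (z : ℝ) : ℝ :=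
  if z = 0 then ((b : ℝ) - 1) / (1 - (b : ℝ) ^ (-(2 * ((min α d : ℕ) : ℤ))))
  else ((b : ℝ) - 1 - (b : ℝ) ^ (2 * ((min α d : ℕ) : ℤ) * ⌊Real.logb b z⌋) *
      ((b : ℝ) ^ (2 * min α d + 1) - 1)) /
    (1 - (b : ℝ) ^ (-(2 * ((min α d : ℕ) : ℤ))))

/-- The `l`-th coefficient `t_l` of the Laurent expansion `g/p = Σ_{l} t_l x^{-l}`
(for `l ≥ 1`; the coefficients with `l ≥ 1` only depend on `g % p`, and are obtained
as power-series coefficients after the substitution `y = x^{-1}`). -/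
def lcoeff (b : ℕ) [Fact (Nat.Prime b)] (m : ℕ) (p g : Polynomial (ZMod b)) (l : ℕ) : ZMod b :=
  PowerSeries.coeff l
    (PowerSeries.X * (((g % p).reflect (m - 1) : Polynomial (ZMod b)) : PowerSeries (ZMod b)) *
      (((p.reflect m : Polynomial (ZMod b)) : PowerSeries (ZMod b)))⁻¹)

/-- `v_m(g/p) = Σ_{l=1}^m t_l b^{-l}`. -/
def vmap (b : ℕ) [Fact (Nat.Prime b)] (m : ℕ) (p g : Polynomial (ZMod b)) : ℝ :=
  ∑ l ∈ Finset.Icc 1 m, ((lcoeff b m p g l).val : ℝ) / (b : ℝ) ^ l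

/-- The `j`-th coordinate `z_{n,j} = v_m(n(x) q_j(x)/p(x))` of the `n`-th point of the
polynomial lattice point set with modulus `p` and generating polynomial `qj`. -/
def plp (b : ℕ) [Fact (Nat.Prime b)] (m : ℕ) (p qj : Polynomial (ZMod b)) (n : ℕ) : ℝ :=
  vmap b m p (trunc b m n * qj)

/-- The `i`-th base-`b` digit (for `i ≥ 1`) of a real number `x ∈ [0,1)`, taken from the
expansion in which infinitely many digits differ from `b - 1`. -/
def rdigit (b : ℕ) (x : ℝ) (i : ℕ) : ℕ := (⌊x * (b : ℝ) ^ i⌋.toNat) % b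

/-- The `k`-th base-`b` Walsh function. -/
def walsh (b k : ℕ) (x : ℝ) : ℂ :=
  Complex.exp (2 * (Real.pi : ℂ) * Complex.I *
    (((∑ a ∈ Finset.range (Nat.log b k + 1), rdigit b x (a + 1) * digit b k a : ℕ)) : ℂ) / (b : ℂ))

/-- `θ(q̃)`: the part of the quality criterion involving the new component `q̃` at index `τ+1`. -/
def theta (b α d m τ : ℕ) (γ : Finset ℕ → ℝ) (p : Polynomial (ZMod b))
    (q : ℕ → Polynomial (ZMod b)) (qt : Polynomial (ZMod b)) : ℝ :=
  ∑ u ∈ (Finset.Icc 1 τ).powerset,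
    (4 : ℝ) ^ ((blk d (insert (τ + 1) u)).card * (d - α)) * γ (blk d (insert (τ + 1) u)) *
      ∑' kk : (↥u → ℕ) × ℕ,
        (if (∀ j, 1 ≤ kk.1 j) ∧ 1 ≤ kk.2 ∧
            p ∣ ((∑ j, trunc b m (kk.1 j) * q (j : ℕ)) + trunc b m kk.2 * qt)
         then (∏ j, rfun b α d (kk.1 j)) * rfun b α d kk.2 else 0)

open Finset

lemma walsh_eq_pow (b k : ℕ) (x : ℝ) :
    walsh b k x = Complex.exp (2 * Real.pi * Complex.I / b) ^
      ∑ i ∈ range (Nat.log b k + 1), rdigit b x (i + 1) * digit b k i := by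
  rw [walsh, ← Complex.exp_nat_mul]
  ring_nf

lemma norm_walsh (b k : ℕ) (x : ℝ) : ‖walsh b k x‖ = 1 := by
  have hI : 2 * Real.pi * Complex.I / b = ((2 * Real.pi / b : ℝ) : ℂ) * Complex.I := by
    push_cast
    ring
  rw [walsh_eq_pow, norm_pow, hI, Complex.norm_exp_ofReal_mul_I, one_pow]

lemma digit_eq_zero_of_lt_pow {b k n i : ℕ} (hb : 0 < b) (hk : k < b ^ n) (hi : n ≤ i) :
    digit b k i = 0 := by
  rw [digit, Nat.div_eq_of_lt (hk.trans_le (Nat.pow_le_pow_right hb hi)), Nat.zero_mod]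

lemma sum_range_mul_digit_eq {b k n : ℕ} (hb : 1 < b) (hk : k < b ^ n) (g : ℕ → ℕ) :
    ∑ i ∈ range n, g i * digit b k i = ∑ i ∈ range (Nat.log b k + 1), g i * digit b k i := by
  have extend : ∀ {n}, k < b ^ n → ∀ N, n ≤ N →
      ∑ i ∈ range N, g i * digit b k i = ∑ i ∈ range n, g i * digit b k i := by
    intro n hk N hN
    refine (sum_subset (range_subset_range.2 hN) fun i _ hi => ?_).symm
    rw [digit_eq_zero_of_lt_pow (by omega) hk (not_lt.1 (mem_range.not.1 hi)), mul_zero]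
  rw [← extend hk _ (le_max_left n (Nat.log b k + 1)),
    extend (Nat.lt_pow_succ_log_self hb k) _ (le_max_right _ _)]

lemma walsh_eq_prod {b k n : ℕ} (hb : 1 < b) (hk : k < b ^ n) (x : ℝ) :
    walsh b k x = ∏ i ∈ range n,
      Complex.exp (2 * Real.pi * Complex.I / b) ^ (rdigit b x (i + 1) * digit b k i) := by
  rw [walsh_eq_pow, prod_pow_eq_pow_sum, sum_range_mul_digit_eq hb hk]

lemma _root_.IsPrimitiveRoot.sum_range_pow_mul {R : Type*} [CommRing R] [IsDomain R] {ζ : R}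
    {n x : ℕ} (hζ : IsPrimitiveRoot ζ n) (hx : x < n) :
    ∑ j ∈ range n, ζ ^ (x * j) = if x = 0 then (n : R) else 0 := by
  split_ifs with h
  · simp [h]
  · have hne : ζ ^ x - 1 ≠ 0 := sub_ne_zero.2 fun h1 =>
      h (Nat.eq_zero_of_dvd_of_lt ((hζ.pow_eq_one_iff_dvd x).1 h1) hx)
    have hgeom := geom_sum_mul (ζ ^ x) n
    rw [← pow_mul, mul_comm x, pow_mul, hζ.pow_eq_one, one_pow, sub_self, mul_eq_zero] at hgeom
    simpa only [pow_mul, hne, or_false] using hgeom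

lemma floor_mul_pow_succ {b : ℕ} (hb : 0 < b) (x : ℝ) (m : ℕ) :
    ⌊x * b ^ (m + 1)⌋₊ = b * ⌊x * b ^ m⌋₊ + rdigit b x (m + 1) := by
  have hdiv : x * b ^ m = x * b ^ (m + 1) / b := by
    field_simp
    ring
  rw [rdigit, Int.floor_toNat, hdiv, Nat.floor_div_natCast, Nat.div_add_mod]

lemma forall_rdigit_eq_zero_iff {b : ℕ} (hb : 0 < b) {x : ℝ} (hx : x < 1) (m : ℕ) :
    (∀ i < m, rdigit b x (i + 1) = 0) ↔ x * b ^ m < 1 := by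
  rw [← Nat.floor_eq_zero]
  induction m with
  | zero => simpa using hx
  | succ m ih =>
    rw [Nat.forall_lt_succ_right, ih, floor_mul_pow_succ hb]
    simp [hb.ne']

def walshDirichlet (b m : ℕ) (x : ℝ) : ℝ := if x * b ^ m < 1 then (b : ℝ) ^ m else 0

lemma sum_walsh_range_pow {b : ℕ} (hb : 1 < b) {x : ℝ} (hx : x < 1) (m : ℕ) :
    ∑ k ∈ range (b ^ m), walsh b k x = walshDirichlet b m x := by
  set ζ := Complex.exp (2 * Real.pi * Complex.I / b)
  have hζ : IsPrimitiveRoot ζ b := Complex.isPrimitiveRoot_exp b (by omega)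
  have hdigits (f : Fin m → Fin b) :
      walsh b (finFunctionFinEquiv f) x = ∏ i : Fin m, ζ ^ (rdigit b x (i + 1) * f i) := by
    rw [walsh_eq_prod hb (finFunctionFinEquiv f).is_lt, ← Fin.prod_univ_eq_prod_range]
    simp_rw [digit, ← finFunctionFinEquiv_symm_apply_val, Equiv.symm_apply_apply]
    rfl
  have hchar (i : Fin m) : ∑ j : Fin b, ζ ^ (rdigit b x (i + 1) * j) =
      if rdigit b x (i + 1) = 0 then (b : ℂ) else 0 := by
    rw [Fin.sum_univ_eq_sum_range (fun j => ζ ^ (rdigit b x (i + 1) * j)),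
      hζ.sum_range_pow_mul (x := rdigit b x (i + 1)) (Nat.mod_lt _ (by omega))]
  rw [← Fin.sum_univ_eq_sum_range, ← finFunctionFinEquiv.sum_comp,
    sum_congr rfl fun f _ => hdigits f,
    ← Fintype.prod_sum (fun (i : Fin m) (j : Fin b) => ζ ^ (rdigit b x (i + 1) * j))]
  simp_rw [hchar, prod_ite_zero, prod_const, card_univ, Fintype.card_fin, walshDirichlet,
    ← forall_rdigit_eq_zero_iff (Nat.zero_lt_of_lt hb) hx m]
  simp only [mem_univ, true_implies, Fin.forall_iff]
  split_ifs <;> simp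

lemma sum_range_pow_eq_sum_blocks {R : Type*} [CommRing R] {b : ℕ} (hb : 1 < b)
    (c w : ℕ → R) (N : ℕ) :
    ∑ k ∈ range (b ^ N), (if k = 0 then 0 else c (Nat.log b k) * w k) =
      ∑ μ ∈ range N, c μ * (∑ k ∈ range (b ^ (μ + 1)), w k - ∑ k ∈ range (b ^ μ), w k) := by
  induction N with
  | zero => simp
  | succ N ih =>
    have hle : b ^ N ≤ b ^ (N + 1) := Nat.pow_le_pow_right (by omega) N.le_succ
    have hblock : ∀ k ∈ Ico (b ^ N) (b ^ (N + 1)),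
        (if k = 0 then 0 else c (Nat.log b k) * w k) = c N * w k := fun k hk => by
      obtain ⟨hlo, hhi⟩ := mem_Ico.1 hk
      rw [if_neg (Nat.pos_of_ne_zero (by positivity) |>.trans_le hlo).ne',
        Nat.log_eq_of_pow_le_of_lt_pow hlo hhi]
    rw [← sum_range_add_sum_Ico _ hle, ih, sum_range_succ, sum_congr rfl hblock, ← mul_sum,
      sum_Ico_eq_sub _ hle]

lemma summable_zpow_neg_mul_log {b p : ℕ} (hb : 1 < b) (hp : 1 < p) :
    Summable fun k : ℕ => (b : ℝ) ^ (-((p * Nat.log b k : ℕ) : ℤ)) := by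
  refine .of_nonneg_of_le (fun k => by positivity) (fun k => ?_)
    (((summable_nat_add_iff 1).2 (Real.summable_one_div_nat_pow.2 hp)).mul_left ((b : ℝ) ^ p))
  have hk : (k + 1) ^ p ≤ b ^ p * b ^ (p * Nat.log b k) :=
    calc (k + 1) ^ p ≤ (b ^ (Nat.log b k + 1)) ^ p :=
          Nat.pow_le_pow_left (Nat.lt_pow_succ_log_self hb k) p
      _ = b ^ p * b ^ (p * Nat.log b k) := by ring
  rw [zpow_neg, zpow_natCast, inv_eq_one_div, mul_one_div,
    div_le_div_iff₀ (by positivity) (by positivity)]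
  exact_mod_cast (one_mul _).trans_le hk

lemma norm_ite_mul_walsh_le (b p k : ℕ) (z : ℝ) :
    ‖if k = 0 then 0 else
      (((b : ℝ) ^ (-((p * Nat.log b k : ℕ) : ℤ)) : ℝ) : ℂ) * walsh b k z‖ ≤
      (b : ℝ) ^ (-((p * Nat.log b k : ℕ) : ℤ)) := by
  split_ifs
  · rw [norm_zero]
    positivity
  · rw [norm_mul, norm_walsh, mul_one, Complex.norm_real, Real.norm_of_nonneg (by positivity)]

lemma mul_pow_lt_one_iff {b : ℕ} (hb : 1 < b) {z : ℝ} (hz : 0 < z) (m : ℕ) :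
    z * b ^ m < 1 ↔ (m : ℤ) < -⌊Real.logb b z⌋ := by
  have hb' : (1 : ℝ) < b := by exact_mod_cast hb
  rw [lt_neg, Int.floor_lt, Real.logb_lt_iff_lt_rpow hb' hz, ← lt_div_iff₀ (by positivity),
    one_div, ← Real.rpow_natCast, ← Real.rpow_neg (by positivity)]
  push_cast
  rfl

lemma zpow_neg_mul_pow_eq_inv_pow {b : ℕ} (hb : 0 < b) (a μ : ℕ) :
    (b : ℝ) ^ (-(((2 * a + 1) * μ : ℕ) : ℤ)) * b ^ μ = ((b : ℝ) ^ (2 * a))⁻¹ ^ μ := by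
  rw [zpow_neg, zpow_natCast, inv_pow, ← pow_mul]
  field_simp
  ring

lemma hasSum_phi {b a : ℕ} (hb : 1 < b) (ha : 1 ≤ a) {z : ℝ} (hz0 : 0 ≤ z) (hz1 : z < 1) :
    HasSum (fun μ : ℕ => (b : ℝ) ^ (-(((2 * a + 1) * μ : ℕ) : ℤ)) *
      (walshDirichlet b (μ + 1) z - walshDirichlet b μ z)) (phi b a a z) := by
  have hb' : (1 : ℝ) < b := by exact_mod_cast hb
  set r : ℝ := ((b : ℝ) ^ (2 * a))⁻¹ with hr
  have hr0 : 0 ≤ r := by positivity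
  have hr1 : r < 1 := inv_lt_one_of_one_lt₀ (one_lt_pow₀ hb' (by omega))
  have hweight := zpow_neg_mul_pow_eq_inv_pow (Nat.zero_lt_of_lt hb) a
  have hfull (μ : ℕ) : (b : ℝ) ^ (-(((2 * a + 1) * μ : ℕ) : ℤ)) * (b ^ (μ + 1) - b ^ μ) =
      (b - 1) * r ^ μ := by
    rw [pow_succ, ← hweight]
    ring
  have hden : (1 : ℝ) - b ^ (-(2 * ((a : ℕ) : ℤ))) = 1 - r := by
    rw [zpow_neg, ← Nat.cast_ofNat, ← Nat.cast_mul, zpow_natCast]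
  rcases hz0.eq_or_lt with rfl | hz
  · simp only [walshDirichlet, zero_mul, zero_lt_one, if_true, hfull]
    rw [phi, if_pos rfl, min_self, hden, div_eq_mul_inv]
    exact (hasSum_geometric_of_lt_one hr0 hr1).mul_left _
  · have hlog : ⌊Real.logb b z⌋ < 0 := Int.floor_lt.2 (by exact_mod_cast Real.logb_neg hb' hz hz1)
    obtain ⟨L, hL⟩ := Int.eq_negSucc_of_lt_zero hlog
    have hker (m : ℕ) : walshDirichlet b m z = if m ≤ L then (b : ℝ) ^ m else 0 := by
      simp only [walshDirichlet, mul_pow_lt_one_iff hb hz, hL, Int.neg_negSucc, Nat.cast_lt,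
        Nat.lt_succ_iff]
    have hvanish : ∀ μ ∉ range (L + 1), (b : ℝ) ^ (-(((2 * a + 1) * μ : ℕ) : ℤ)) *
        (walshDirichlet b (μ + 1) z - walshDirichlet b μ z) = 0 := fun μ hμ => by
      rw [mem_range] at hμ
      rw [hker, hker, if_neg (by omega), if_neg (by omega), sub_zero, mul_zero]
    convert hasSum_sum_of_ne_finset_zero (L := .unconditional ℕ) hvanish using 1
    have hpow : (b : ℝ) ^ (2 * ((a : ℕ) : ℤ) * Int.negSucc L) = r ^ (L + 1) := by
      rw [show 2 * ((a : ℕ) : ℤ) * Int.negSucc L = -((2 * a * (L + 1) : ℕ) : ℤ) by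
          push_cast [Int.negSucc_eq]; ring,
        zpow_neg, zpow_natCast, hr, inv_pow, pow_mul]
    have hrb : r * b ^ (2 * a) = 1 := inv_mul_cancel₀ (by positivity)
    have hgeom := geom_sum_mul r L
    rw [sum_range_succ, sum_congr rfl fun μ hμ => by
        rw [hker, hker, if_pos (by simp at hμ; omega), if_pos (by simp at hμ; omega), hfull],
      hker, hker, if_neg (by omega), if_pos le_rfl, zero_sub, mul_neg, hweight, ← mul_sum,
      phi, if_neg hz.ne', min_self, hden, hL, hpow, div_eq_iff (by linarith)]
    linear_combination (↑b - 1) * hgeom - ↑b * r ^ L * hrb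

theorem statement6 (b : ℕ) (hb : Nat.Prime b) (a : ℕ) (ha : 1 ≤ a)
    (z : ℝ) (hz0 : 0 ≤ z) (hz1 : z < 1) :
    Summable (fun k : ℕ => ‖
      (if k = 0 then 0 else
        (((b : ℝ) ^ (-(((2 * a + 1) * Nat.log b k : ℕ) : ℤ)) : ℝ) : ℂ) * walsh b k z)‖) ∧
    HasSum (fun k : ℕ =>
      if k = 0 then 0 else
        (((b : ℝ) ^ (-(((2 * a + 1) * Nat.log b k : ℕ) : ℤ)) : ℝ) : ℂ) * walsh b k z)
      ((phi b a a z : ℝ) : ℂ) := by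
  have hb1 := hb.one_lt
  have hnorm := Summable.of_nonneg_of_le (fun k => norm_nonneg _)
    (norm_ite_mul_walsh_le b (2 * a + 1) · z) (summable_zpow_neg_mul_log hb1 (by omega))
  have hsum := hnorm.of_norm
  -- the sum of a summable series is the limit of its partial sums along `b ^ N`
  refine ⟨hnorm, hsum.hasSum_iff.2 (tendsto_nhds_unique
    (hsum.hasSum.tendsto_sum_nat.comp (tendsto_pow_atTop_atTop_of_one_lt hb1)) ?_)⟩
  refine (Complex.hasSum_ofReal.2 (hasSum_phi hb1 ha hz0 hz1)).tendsto_sum_nat.congr fun N => ?_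
  rw [Function.comp_apply, sum_range_pow_eq_sum_blocks hb1
    (fun μ => (((b : ℝ) ^ (-(((2 * a + 1) * μ : ℕ) : ℤ)) : ℝ) : ℂ)) (fun k => walsh b k z)]
  simp only [sum_walsh_range_pow hb1 hz1]
  push_cast
  rfl

end ISPLR
end
end

section
/- Let b be a prime, m, d ∈ ℕ, α ≥ 1 an integer, p ∈ F_b[x] irreducible with deg(p) = m, and γ = (γ_w) nonnegative weights. For the single-component generating vector q_1 = 1 (the constant polynomial 1), one has exactly B_{α,d,γ}((1), p) = 4^{max(d-α,0)} γ_{{1}} (b-1) / (b^{(2min(α,d)+1)m} (1 - b^{-2min(α,d)})). -/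
/-!
Since `tr_m(k)` has degree `< m = deg p`, the divisibility `p ∣ tr_m(k)` forces `tr_m(k) = 0`,
i.e. `b^m ∣ k`. Writing `k = b^m (n + 1)` gives `μ(k) = m + μ(n + 1)`, so with
`c = 2 min(α, d) + 1` the sum factors as `b^{-cm} Σ_n b^{-c μ(n + 1)}`. The `(b - 1) b^μ` integers
`n + 1` with `μ(n + 1) = μ` turn the remaining sum into the geometric series
`(b - 1) Σ_μ b^{-(c - 1) μ}`.
-/

open scoped Classical
open Polynomial

noncomputable section

namespace ISPLR

section Digits

variable {b : ℕ}

lemma pow_dvd_iff_digit_eq_zero (hb : 0 < b) (m k : ℕ) :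
    b ^ m ∣ k ↔ ∀ i < m, digit b k i = 0 := by
  induction m with
  | zero => simp
  | succ m ih =>
    constructor
    · intro h i hi
      obtain ⟨t, rfl⟩ := (pow_dvd_pow b (show i + 1 ≤ m + 1 by omega)).trans h
      rw [digit, pow_succ, mul_assoc, Nat.mul_div_cancel_left _ (pow_pos hb i), Nat.mul_mod_right]
    · intro h
      obtain ⟨t, rfl⟩ := ih.mpr fun i hi => h i (by omega)
      have hm := h m (by omega)
      rw [digit, Nat.mul_div_cancel_left _ (pow_pos hb m)] at hm
      rw [pow_succ]
      exact mul_dvd_mul_left _ (Nat.dvd_of_mod_eq_zero hm)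

lemma natCast_digit_eq_zero_iff (hb : 0 < b) (k i : ℕ) :
    (digit b k i : ZMod b) = 0 ↔ digit b k i = 0 := by
  rw [ZMod.natCast_eq_zero_iff]
  exact ⟨fun h => Nat.eq_zero_of_dvd_of_lt h (Nat.mod_lt _ hb), fun h => h ▸ dvd_zero b⟩

lemma coeff_trunc (b m k i : ℕ) :
    (trunc b m k).coeff i = if i < m then (digit b k i : ZMod b) else 0 := by
  simp only [trunc, finsetSum_coeff, coeff_C_mul, coeff_X_pow, mul_ite, mul_one, mul_zero,
    Finset.sum_ite_eq, Finset.mem_range]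

lemma degree_trunc_lt (b m k : ℕ) : (trunc b m k).degree < m := by
  rw [degree_lt_iff_coeff_zero]
  intro i hi
  rw [coeff_trunc, if_neg (by exact_mod_cast hi.not_gt)]

lemma trunc_eq_zero_iff (hb : 0 < b) (m k : ℕ) : trunc b m k = 0 ↔ b ^ m ∣ k := by
  rw [pow_dvd_iff_digit_eq_zero hb, Polynomial.ext_iff]
  simp only [coeff_trunc, coeff_zero, ite_eq_right_iff, natCast_digit_eq_zero_iff hb]

lemma dvd_trunc_iff [Fact b.Prime] {m : ℕ} {p : (ZMod b)[X]} (hdeg : p.degree = m) (k : ℕ) :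
    p ∣ trunc b m k ↔ b ^ m ∣ k := by
  rw [← trunc_eq_zero_iff (Fact.out : b.Prime).pos]
  refine ⟨fun h => eq_zero_of_dvd_of_degree_lt h ?_, fun h => h ▸ dvd_zero p⟩
  exact hdeg ▸ degree_trunc_lt b m k

end Digits

section LogSums

variable {b : ℕ}

lemma log_pow_mul (hb : 1 < b) (m : ℕ) {n : ℕ} (hn : n ≠ 0) :
    Nat.log b (b ^ m * n) = m + Nat.log b n := by
  induction m with
  | zero => simp
  | succ m ih =>
    rw [pow_succ, mul_right_comm, Nat.log_mul_base hb (by positivity), ih]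
    omega

lemma card_log_succ_fiber (hb : 1 < b) (μ : ℕ) :
    Nat.card ((fun n => Nat.log b (n + 1)) ⁻¹' {μ}) = (b - 1) * b ^ μ := by
  have hpos : 1 ≤ b ^ μ := Nat.one_le_pow μ b (by omega)
  have hfiber : (fun n => Nat.log b (n + 1)) ⁻¹' {μ} =
      ↑(Finset.Ico (b ^ μ - 1) (b ^ (μ + 1) - 1)) := by
    ext n
    simp only [Set.mem_preimage, Set.mem_singleton_iff, Finset.coe_Ico, Set.mem_Ico,
      Nat.log_eq_iff (Or.inr ⟨hb, n.succ_ne_zero⟩)]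
    omega
  have hle : b ^ μ ≤ b * b ^ μ := Nat.le_mul_of_pos_left _ (by omega)
  rw [hfiber, Nat.card_coe_set_eq, Set.ncard_coe_finset, Nat.card_Ico, pow_succ', Nat.sub_one_mul]
  omega

lemma hasSum_pow_log_succ (hb : 1 < b) {y : ℝ} (hy : 0 ≤ y) (hby : b * y < 1) :
    HasSum (fun n : ℕ => y ^ Nat.log b (n + 1)) ((b - 1) / (1 - b * y)) := by
  set g : ℕ → ℕ := fun n => Nat.log b (n + 1)
  have hfiber : ∀ μ, ∑' n : g ⁻¹' {μ}, y ^ g n = (b - 1) * (b * y) ^ μ := by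
    intro μ
    rw [tsum_congr fun n : g ⁻¹' {μ} => congrArg (y ^ ·) n.2, tsum_const,
      card_log_succ_fiber hb, nsmul_eq_mul, Nat.cast_mul, Nat.cast_sub hb.le, Nat.cast_pow,
      mul_pow]
    push_cast
    ring
  have hgeom : HasSum (fun μ : ℕ => (b - 1) * (b * y) ^ μ) ((b - 1) / (1 - b * y)) :=
    (hasSum_geometric_of_lt_one (by positivity) hby).mul_left _
  have hsummable : Summable fun n => y ^ g n := by
    rw [summable_partition (fun n => pow_nonneg hy _) (s := fun μ => g ⁻¹' {μ})
      fun n => ⟨g n, rfl, fun μ h => h.symm⟩]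
    refine ⟨fun μ => ?_, by simpa only [hfiber] using hgeom.summable⟩
    have : Finite (g ⁻¹' {μ}) := Nat.finite_of_card_ne_zero <| by
      rw [card_log_succ_fiber hb]; exact Nat.mul_ne_zero (by omega) (by positivity)
    exact .of_finite
  convert hsummable.hasSum
  exact hgeom.unique (by simpa only [hfiber] using hsummable.hasSum.tsum_fiberwise g)

end LogSums

lemma tsum_ite_pos_dvd {M : Type*} [AddCommMonoid M] [TopologicalSpace M] (f : ℕ → M)
    {N : ℕ} (hN : 0 < N) :
    ∑' k, (if 1 ≤ k ∧ N ∣ k then f k else 0) = ∑' n, f (N * (n + 1)) := by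
  have hinj : Function.Injective fun n => N * (n + 1) := fun x y h => by
    simpa using Nat.eq_of_mul_eq_mul_left hN h
  rw [← hinj.tsum_eq]
  · exact tsum_congr fun n => if_pos ⟨Nat.mul_pos hN n.succ_pos, dvd_mul_right N _⟩
  · intro k hk
    obtain ⟨hk1, n, rfl⟩ : 1 ≤ k ∧ N ∣ k := by by_contra h; exact hk (if_neg h)
    exact ⟨n - 1, by simp only [Nat.sub_add_cancel (Nat.pos_of_mul_pos_left hk1)]⟩

lemma rfun_of_ne_zero (b α d : ℕ) {k : ℕ} (hk : k ≠ 0) :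
    rfun b α d k = ((b : ℝ)⁻¹) ^ ((2 * min α d + 1) * Nat.log b k) := by
  rw [rfun, mu, if_neg hk, zpow_neg, zpow_natCast, inv_pow]

lemma tsum_rfun_of_pow_dvd {b : ℕ} (hb : 1 < b) (α d m : ℕ) (hαd : 0 < min α d) :
    ∑' k : ℕ, (if 1 ≤ k ∧ b ^ m ∣ k then rfun b α d k else 0) =
      ((b : ℝ)⁻¹) ^ ((2 * min α d + 1) * m) * ((b - 1) / (1 - ((b : ℝ)⁻¹) ^ (2 * min α d))) := by
  set x : ℝ := (b : ℝ)⁻¹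
  have hbx : (b : ℝ) * x = 1 := mul_inv_cancel₀ (by positivity)
  have hbxc : (b : ℝ) * x ^ (2 * min α d + 1) = x ^ (2 * min α d) := by
    rw [pow_succ, mul_left_comm, hbx, mul_one]
  have hsum := hasSum_pow_log_succ hb (y := x ^ (2 * min α d + 1)) (by positivity) <| by
    rw [hbxc]
    exact pow_lt_one₀ (by positivity) (inv_lt_one_of_one_lt₀ (by exact_mod_cast hb)) (by omega)
  rw [hbxc] at hsum
  rw [tsum_ite_pos_dvd _ (pow_pos (by omega) m), ← hsum.tsum_eq, ← tsum_mul_left]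
  refine tsum_congr fun n => ?_
  rw [rfun_of_ne_zero _ _ _ (by positivity), log_pow_mul hb m n.succ_ne_zero, mul_add,
    pow_add, pow_mul, pow_mul]

lemma Bcrit_one (b α d m : ℕ) (γ : Finset ℕ → ℝ) (p : (ZMod b)[X]) (q : ℕ → (ZMod b)[X]) :
    Bcrit b α d m γ p 1 q = 4 ^ (d - α) * γ {1} *
      ∑' k : ℕ, if 1 ≤ k ∧ p ∣ trunc b m k * q 1 then rfun b α d k else 0 := by
  have hsubsets : ((Finset.Icc 1 1).powerset.filter fun u => u ≠ ∅) = {({1} : Finset ℕ)} := by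
    decide
  have hblk : blk d {1} = {1} := by simp [blk]
  let : Unique ↥({1} : Finset ℕ) :=
    ⟨⟨⟨1, Finset.mem_singleton_self 1⟩⟩, fun j => Subtype.ext (Finset.mem_singleton.mp j.2)⟩
  rw [Bcrit, hsubsets, Finset.sum_singleton, hblk, Finset.card_singleton, one_mul,
    ← (Equiv.funUnique _ ℕ).symm.tsum_eq]
  simp only [Equiv.funUnique_symm_apply, uniqueElim_const, forall_const, Fintype.sum_unique,
    Fintype.prod_unique]
  rfl

theorem statement11_general (b : ℕ) (hb : Nat.Prime b) (m d α : ℕ)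
    (hd : 1 ≤ d) (hα : 1 ≤ α)
    (p : Polynomial (ZMod b)) (hdeg : p.degree = (m : WithBot ℕ))
    (γ : Finset ℕ → ℝ) :
    Bcrit b α d m γ p 1 (fun _ => 1) =
      (4 : ℝ) ^ (d - α) * γ {1} * ((b : ℝ) - 1) /
        ((b : ℝ) ^ ((2 * min α d + 1) * m) * (1 - (b : ℝ) ^ (-(2 * ((min α d : ℕ) : ℤ))))) := by
  have : Fact b.Prime := ⟨hb⟩
  have hzpow : (b : ℝ) ^ (-(2 * ((min α d : ℕ) : ℤ))) = ((b : ℝ)⁻¹) ^ (2 * min α d) := by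
    rw [zpow_neg, inv_pow, ← zpow_natCast]
    push_cast
    rfl
  simp only [Bcrit_one, mul_one, dvd_trunc_iff hdeg,
    tsum_rfun_of_pow_dvd hb.one_lt α d m (lt_min hα hd), hzpow, div_eq_mul_inv, mul_inv]
  ring

theorem statement11 (b : ℕ) (hb : Nat.Prime b) (m d α : ℕ)
    (hm : 1 ≤ m) (hd : 1 ≤ d) (hα : 1 ≤ α)
    (p : Polynomial (ZMod b)) (hp : Irreducible p) (hdeg : p.degree = (m : WithBot ℕ))
    (γ : Finset ℕ → ℝ) (hγ : ∀ w, 0 ≤ γ w) :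
    Bcrit b α d m γ p 1 (fun _ => 1) =
      (4 : ℝ) ^ (d - α) * γ {1} * ((b : ℝ) - 1) /
        ((b : ℝ) ^ ((2 * min α d + 1) * m) * (1 - (b : ℝ) ^ (-(2 * ((min α d : ℕ) : ℤ))))) :=
  statement11_general b hb m d α hd hα p hdeg γ

end ISPLR
end
end
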